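/- If f̃(z) = e^{-z} ∑_{k≥0} a_k z^k/k! is an entire function, then for every n, a_n = ∑_{j≥0} f̃^{(j)}(n)/j! · τ_j(n), where τ_j(n) := n![z^n](z-n)^j e^z. -/

import Mathlib

/-!
Put `g(z) = e^z f̃(z) = ∑ a_k z^k / k!` and expand `f̃` in its Taylor series at `n`,
`f̃(z) = ∑_j c_j (z - n)^j` with `c_j = f̃^{(j)}(n) / j!`, so that `g(z) = ∑_j c_j (z - n)^j e^z`.
Expanding each `(z - n)^j e^z` around `0` gives a double series, absolutely convergent because
it is dominated termwise by the expansion of `∑_j |c_j| (|z| + n)^j e^{|z|}`. Summing it over `j`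
first yields a second power series for `g`; comparing its `n`-th coefficient with `a_n / n!` is
the identity, since `τ_j(n) = n! [z^n] (z - n)^j e^z`.
-/

open Finset
open scoped Nat NNReal

noncomputable def tau (j n : ℕ) : ℂ :=
  ∑ ℓ ∈ Finset.range (j + 1),
    (j.choose ℓ : ℂ) * (-1) ^ (j - ℓ) * (n.descFactorial ℓ : ℂ) * (n : ℂ) ^ (j - ℓ)

/-- `poissonCharlier w j k = k! [z^k] (z + w)^j e^z`. -/
def poissonCharlier {R : Type*} [CommRing R] (w : R) (j k : ℕ) : R :=
  ∑ ℓ ∈ range (j + 1), (j.choose ℓ : R) * w ^ (j - ℓ) * (k.descFactorial ℓ : R)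

section ExpSeries

variable {𝕜 : Type*} [Field 𝕜] [CharZero 𝕜] [TopologicalSpace 𝕜] [IsTopologicalRing 𝕜]
  {z E : 𝕜}

theorem hasSum_descFactorial_mul_pow_div_factorial
    (hE : HasSum (fun m => z ^ m / m !) E) (ℓ : ℕ) :
    HasSum (fun k => (k.descFactorial ℓ : 𝕜) * z ^ k / k !) (z ^ ℓ * E) := by
  refine ((add_left_injective ℓ).hasSum_iff fun k hk => ?_).mp ?_
  · have hkℓ : k < ℓ := by
      by_contra! h
      exact hk ⟨k - ℓ, Nat.sub_add_cancel h⟩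
    simp [Nat.descFactorial_eq_zero_iff_lt.mpr hkℓ]
  · refine (hE.mul_left (z ^ ℓ)).congr_fun fun m => ?_
    have hfac : ((m + ℓ)! : 𝕜) = m ! * (m + ℓ).descFactorial ℓ := by
      exact_mod_cast (Nat.add_sub_cancel m ℓ ▸ Nat.factorial_mul_descFactorial
        (Nat.le_add_left ℓ m)).symm
    have hm : (m ! : 𝕜) ≠ 0 := Nat.cast_ne_zero.mpr m.factorial_ne_zero
    have hd : ((m + ℓ).descFactorial ℓ : 𝕜) ≠ 0 := by
      exact_mod_cast (Nat.descFactorial_pos.mpr (Nat.le_add_left ℓ m)).ne'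
    simp only [Function.comp_apply, hfac, pow_add]
    field_simp

theorem hasSum_poissonCharlier_mul_pow_div_factorial
    (hE : HasSum (fun m => z ^ m / m !) E) (w : 𝕜) (j : ℕ) :
    HasSum (fun k => poissonCharlier w j k * z ^ k / k !) ((z + w) ^ j * E) := by
  have h := hasSum_sum fun ℓ (_ : ℓ ∈ range (j + 1)) =>
    (hasSum_descFactorial_mul_pow_div_factorial hE ℓ).mul_left ((j.choose ℓ : 𝕜) * w ^ (j - ℓ))
  have hsum : (z + w) ^ j * E =
      ∑ ℓ ∈ range (j + 1), (j.choose ℓ : 𝕜) * w ^ (j - ℓ) * (z ^ ℓ * E) := by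
    rw [add_pow, sum_mul]
    exact sum_congr rfl fun ℓ _ => by ring
  rw [hsum]
  refine h.congr_fun fun k => ?_
  rw [poissonCharlier, sum_mul, sum_div]
  exact sum_congr rfl fun ℓ _ => by ring

end ExpSeries

theorem norm_poissonCharlier_le {R : Type*} [NormedCommRing R] [NormOneClass R] (w : R)
    (j k : ℕ) : ‖poissonCharlier w j k‖ ≤ poissonCharlier ‖w‖ j k := by
  refine (norm_sum_le _ _).trans (sum_le_sum fun ℓ _ => ?_)
  refine (norm_mul_le _ _).trans ?_
  gcongr
  · refine (norm_mul_le _ _).trans ?_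
    gcongr
    · simpa using Nat.norm_cast_le (α := R) (j.choose ℓ)
    · exact norm_pow_le _ _
  · simpa using Nat.norm_cast_le (α := R) (k.descFactorial ℓ)

section PowerSeries

open FormalMultilinearSeries

variable {𝕜 : Type*} [RCLike 𝕜] {u v : ℕ → 𝕜} {g : 𝕜 → 𝕜}

theorem radius_ofScalars_eq_top_of_forall_summable
    (h : ∀ z : 𝕜, Summable fun k => u k * z ^ k) : (ofScalars 𝕜 u).radius = ⊤ := by
  refine ENNReal.eq_top_of_forall_nnreal_le fun r =>
    (ofScalars 𝕜 u).le_radius_of_tendsto (l := 0) ?_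
  simpa [ofScalars_norm] using (h ((r : ℝ) : 𝕜)).tendsto_atTop_zero.norm

theorem summable_norm_mul_pow_of_forall_summable
    (h : ∀ z : 𝕜, Summable fun k => u k * z ^ k) (r : ℝ≥0) :
    Summable fun k => ‖u k‖ * (r : ℝ) ^ k := by
  have hr : (r : ENNReal) < (ofScalars 𝕜 u).radius := by
    rw [radius_ofScalars_eq_top_of_forall_summable h]
    exact ENNReal.coe_lt_top
  simpa [ofScalars_norm] using (ofScalars 𝕜 u).summable_norm_mul_pow hr

theorem hasFPowerSeriesOnBall_ofScalars_of_forall_hasSum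
    (h : ∀ z, HasSum (fun k => u k * z ^ k) (g z)) :
    HasFPowerSeriesOnBall g (ofScalars 𝕜 u) 0 ⊤ where
  r_le := (radius_ofScalars_eq_top_of_forall_summable fun z => (h z).summable).ge
  r_pos := ENNReal.zero_lt_top
  hasSum _ := by simpa [ofScalars_apply_eq, mul_comm] using h _

theorem differentiable_of_forall_hasSum_mul_pow
    (h : ∀ z, HasSum (fun k => u k * z ^ k) (g z)) : Differentiable 𝕜 g := fun z =>
  ((hasFPowerSeriesOnBall_ofScalars_of_forall_hasSum h).analyticAt_of_mem
    (by simp)).differentiableAt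

theorem eq_of_forall_hasSum_mul_pow (hu : ∀ z, HasSum (fun k => u k * z ^ k) (g z))
    (hv : ∀ z, HasSum (fun k => v k * z ^ k) (g z)) : u = v :=
  have hpu := (hasFPowerSeriesOnBall_ofScalars_of_forall_hasSum hu).hasFPowerSeriesAt
  have hpv := (hasFPowerSeriesOnBall_ofScalars_of_forall_hasSum hv).hasFPowerSeriesAt
  ofScalars_series_injective (𝕜 := 𝕜) (E := 𝕜) (hpu.eq_formalMultilinearSeries hpv)

end PowerSeries

section Rearrangement

variable {c : ℕ → ℂ}

theorem summable_mul_poissonCharlier_mul_pow (hc : ∀ z : ℂ, Summable fun j => c j * z ^ j)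
    (w z : ℂ) :
    Summable fun p : ℕ × ℕ => c p.1 * (poissonCharlier w p.1 p.2 * z ^ p.2 / (p.2 ! : ℂ)) := by
  have hexp : HasSum (fun m => ‖z‖ ^ m / m !) (Real.exp ‖z‖) := by
    rw [Real.exp_eq_exp_ℝ]
    exact NormedSpace.expSeries_div_hasSum_exp _
  have hrow (j : ℕ) := (hasSum_poissonCharlier_mul_pow_div_factorial hexp ‖w‖ j).mul_left ‖c j‖
  have hbound : Summable fun p : ℕ × ℕ =>
      ‖c p.1‖ * (poissonCharlier ‖w‖ p.1 p.2 * ‖z‖ ^ p.2 / p.2 !) := by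
    refine (summable_prod_of_nonneg fun p => ?_).mpr ⟨fun j => (hrow j).summable, ?_⟩
    · have : 0 ≤ poissonCharlier ‖w‖ p.1 p.2 := sum_nonneg fun _ _ => by positivity
      positivity
    · simp only [fun j => (hrow j).tsum_eq, ← mul_assoc]
      exact (summable_norm_mul_pow_of_forall_summable hc (‖z‖₊ + ‖w‖₊)).mul_right _
  refine hbound.of_norm_bounded fun p => ?_
  rw [norm_mul, norm_div, norm_mul, norm_pow, Complex.norm_natCast]
  gcongr
  exact norm_poissonCharlier_le w p.1 p.2

theorem summable_mul_poissonCharlier (hc : ∀ z : ℂ, Summable fun j => c j * z ^ j) (w : ℂ)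
    (k : ℕ) : Summable fun j => c j * poissonCharlier w j k := by
  have hk : (k ! : ℂ) ≠ 0 := Nat.cast_ne_zero.mpr k.factorial_ne_zero
  simpa [mul_assoc, div_mul_cancel₀ _ hk] using
    ((summable_mul_poissonCharlier_mul_pow hc w 1).prod_symm.prod_factor k).mul_right (k ! : ℂ)

theorem hasSum_tsum_mul_poissonCharlier_mul_pow {f : ℂ → ℂ} {w : ℂ}
    (hf : ∀ z, HasSum (fun j => c j * (z + w) ^ j) (f z)) (z : ℂ) :
    HasSum (fun k => (∑' j, c j * poissonCharlier w j k) / (k ! : ℂ) * z ^ k)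
      (f z * Complex.exp z) := by
  have hc (z : ℂ) : Summable fun j => c j * z ^ j := by simpa using (hf (z - w)).summable
  have hexp : HasSum (fun m => z ^ m / m !) (Complex.exp z) := by
    rw [Complex.exp_eq_exp_ℂ]
    exact NormedSpace.expSeries_div_hasSum_exp _
  obtain ⟨T, hT⟩ := summable_mul_poissonCharlier_mul_pow hc w z
  have hrows : HasSum (fun j => c j * ((z + w) ^ j * Complex.exp z)) T :=
    hT.prod_fiberwise fun j =>
      (hasSum_poissonCharlier_mul_pow_div_factorial hexp w j).mul_left (c j)
  have hsum : HasSum (fun j => c j * ((z + w) ^ j * Complex.exp z)) (f z * Complex.exp z) := by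
    simpa only [mul_assoc] using (hf z).mul_right (Complex.exp z)
  rw [← hrows.unique hsum]
  refine ((Equiv.prodComm ℕ ℕ).hasSum_iff.mpr hT).prod_fiberwise fun k => ?_
  have hcol := (summable_mul_poissonCharlier hc w k).hasSum.mul_right (z ^ k / k !)
  rw [div_mul_eq_mul_div, mul_div_assoc]
  exact hcol.congr_fun fun j => by
    simp only [Function.comp_apply, Equiv.prodComm_apply, Prod.swap_prod_mk]
    ring

end Rearrangement

theorem tau_eq_poissonCharlier (j n : ℕ) : tau j n = poissonCharlier (-(n : ℂ)) j n :=
  sum_congr rfl fun ℓ _ => by rw [neg_pow]; ring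

theorem poisson_charlier_identity (a : ℕ → ℂ)
    (hconv : ∀ z : ℂ, Summable fun k => a k * z ^ k / (k.factorial : ℂ))
    (f : ℂ → ℂ)
    (hf : ∀ z : ℂ, f z = Complex.exp (-z) * ∑' k, a k * z ^ k / (k.factorial : ℂ))
    (n : ℕ) :
    HasSum (fun j => iteratedDeriv j f (n : ℂ) / (j.factorial : ℂ) * tau j n) (a n) := by
  have hg (z : ℂ) : HasSum (fun k => a k / (k ! : ℂ) * z ^ k) (∑' k, a k * z ^ k / k !) := by
    simpa only [div_mul_eq_mul_div] using (hconv z).hasSum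
  have hf_diff : Differentiable ℂ f := by
    rw [funext hf]
    exact (Complex.differentiable_exp.comp differentiable_neg).mul
      (differentiable_of_forall_hasSum_mul_pow hg)
  set c : ℕ → ℂ := fun j => iteratedDeriv j f n / (j ! : ℂ)
  have htaylor (z : ℂ) : HasSum (fun j => c j * (z + -(n : ℂ)) ^ j) (f z) := by
    refine (Complex.hasSum_taylorSeries_of_entire hf_diff n z).congr_fun fun j => ?_
    simp only [c, smul_eq_mul, sub_eq_add_neg]
    ring
  have hcoeff := eq_of_forall_hasSum_mul_pow hg fun z => by
    have hfz : f z * Complex.exp z = ∑' k, a k * z ^ k / k ! := by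
      rw [hf z, mul_comm, ← mul_assoc, ← Complex.exp_add, add_neg_cancel, Complex.exp_zero,
        one_mul]
    exact hfz ▸ hasSum_tsum_mul_poissonCharlier_mul_pow htaylor z
  have han : a n = ∑' j, c j * poissonCharlier (-(n : ℂ)) j n :=
    (div_left_inj' (Nat.cast_ne_zero.mpr n.factorial_ne_zero)).mp (congrFun hcoeff n)
  have hc (z : ℂ) : Summable fun j => c j * z ^ j := by
    simpa using (htaylor (z + n)).summable
  simpa only [han, tau_eq_poissonCharlier] using (summable_mul_poissonCharlier hc (-n) n).hasSum
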